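/- Suppose X and Y are sets with maps f : X → X and g : Y → Y, and there exist maps r : X → Y, s : Y → X and m ≥ 1 with r∘f = g∘r, f∘s = s∘g, s∘r = f^m, and r∘s = g^m (a shift equivalence of lag m). Then the induced maps r̄ : X̄ → Ȳ given by (x₀,x₁,…) ↦ (r(x_m), r(x_{m+1}), …) and s̄ : Ȳ → X̄ given by (y₀,y₁,…) ↦ (s(y₀), s(y₁), …) satisfy s̄∘r̄ = id on X̄, r̄∘s̄ = id on Ȳ, and r̄∘f̄ = ḡ∘r̄. In particular r̄ is a conjugacy between (X̄, f̄) and (Ȳ, ḡ). -/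

import Mathlib

/-!
A shift equivalence lets us transport orbits backwards along `r` and `s` coordinatewise, since both
maps intertwine the dynamics. The composites `s ∘ r = f^[m]` and `r ∘ s = g^[m]` are undone on the
inverse limit by dropping the first `m` coordinates, because `f^[m]` sends `x_{m+n}` back to `x_n`.
The shift commutes with both constructions, as it acts on each coordinate by `f`.
-/

/-- The inverse limit of a self-map `f : X → X`. -/
def InvLim {X : Type*} (f : X → X) : Type _ :=
  {x : ℕ → X // ∀ n, f (x (n + 1)) = x n}

/-- The shift map `f̄(x₀,x₁,…) = (f(x₀),x₀,x₁,…)` on the inverse limit. -/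
def shiftMap {X : Type*} (f : X → X) (x : InvLim f) : InvLim f :=
  ⟨fun n => Nat.casesOn n (f (x.1 0)) (fun k => x.1 k), by
    intro n
    cases n with
    | zero => rfl
    | succ k => exact x.2 k⟩

open Function

namespace InvLim

variable {X Y : Type*} {f : X → X} {g : Y → Y}

@[ext]
theorem ext {x y : InvLim f} (h : ∀ n, x.1 n = y.1 n) : x = y :=
  Subtype.ext (funext h)

theorem iterate_apply_add (x : InvLim f) (k n : ℕ) : f^[k] (x.1 (k + n)) = x.1 n := by
  induction k with
  | zero => rw [Nat.zero_add, iterate_zero_apply]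
  | succ k ih => rw [iterate_succ_apply, Nat.add_right_comm, x.2, ih]

theorem shiftMap_apply (x : InvLim f) (n : ℕ) : (shiftMap f x).1 n = f (x.1 n) := by
  cases n with
  | zero => rfl
  | succ n => exact (x.2 n).symm

def map (φ : X → Y) (hφ : Semiconj φ f g) (x : InvLim f) : InvLim g :=
  ⟨fun n => φ (x.1 n), fun n => by rw [← hφ, x.2]⟩

def drop (k : ℕ) (x : InvLim f) : InvLim f :=
  ⟨fun n => x.1 (k + n), fun n => x.2 (k + n)⟩

theorem drop_map (φ : X → Y) (hφ : Semiconj φ f g) (k : ℕ) (x : InvLim f) :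
    drop k (map φ hφ x) = map φ hφ (drop k x) :=
  rfl

theorem map_map_drop_of_comp_eq_iterate {φ : X → Y} {ψ : Y → X} (hφ : Semiconj φ f g)
    (hψ : Semiconj ψ g f) {k : ℕ} (h : ψ ∘ φ = f^[k]) (x : InvLim f) :
    map ψ hψ (map φ hφ (drop k x)) = x := by
  ext n
  exact (congrFun h _).trans (iterate_apply_add x k n)

theorem shiftMap_map (φ : X → Y) (hφ : Semiconj φ f g) (x : InvLim f) :
    shiftMap g (map φ hφ x) = map φ hφ (shiftMap f x) := by
  ext n
  calc (shiftMap g (map φ hφ x)).1 n = g (φ (x.1 n)) := shiftMap_apply _ n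
    _ = φ (f (x.1 n)) := (hφ _).symm
    _ = φ ((shiftMap f x).1 n) := by rw [shiftMap_apply]

theorem shiftMap_drop (k : ℕ) (x : InvLim f) : shiftMap f (drop k x) = drop k (shiftMap f x) := by
  ext n
  exact (shiftMap_apply (drop k x) n).trans (shiftMap_apply x (k + n)).symm

end InvLim

open InvLim

theorem stmt4_general {X Y : Type*} (f : X → X) (g : Y → Y) (r : X → Y) (s : Y → X)
    (m : ℕ)
    (hrf : r ∘ f = g ∘ r) (hfs : f ∘ s = s ∘ g)
    (hsr : s ∘ r = f^[m]) (hrs : r ∘ s = g^[m]) :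
    ∃ (rbar : InvLim f → InvLim g) (sbar : InvLim g → InvLim f),
      (∀ (x : InvLim f) (n : ℕ), (rbar x).1 n = r (x.1 (m + n))) ∧
      (∀ (y : InvLim g) (n : ℕ), (sbar y).1 n = s (y.1 n)) ∧
      sbar ∘ rbar = id ∧ rbar ∘ sbar = id ∧
      rbar ∘ shiftMap f = shiftMap g ∘ rbar := by
  have hr : Semiconj r f g := semiconj_iff_comp_eq.mpr hrf
  have hs : Semiconj s g f := semiconj_iff_comp_eq.mpr hfs.symm
  refine ⟨fun x => map r hr (drop m x), map s hs, fun _ _ => rfl, fun _ _ => rfl, ?_, ?_, ?_⟩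
  · funext x
    exact map_map_drop_of_comp_eq_iterate hr hs hsr x
  · funext y
    rw [comp_apply, drop_map]
    exact map_map_drop_of_comp_eq_iterate hs hr hrs y
  · funext x
    rw [comp_apply, comp_apply, shiftMap_map, shiftMap_drop]

/-- a shift equivalence `(r,s)` of lag `m` between `(X,f)` and `(Y,g)`
induces maps `r̄ : X̄ → Ȳ`, `(x₀,x₁,…) ↦ (r(x_m),r(x_{m+1}),…)` and
`s̄ : Ȳ → X̄`, `(y₀,y₁,…) ↦ (s(y₀),s(y₁),…)`, which are mutually inverse and
satisfy `r̄∘f̄ = ḡ∘r̄`; in particular `r̄` is a conjugacy of `(X̄,f̄)` and `(Ȳ,ḡ)`. -/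
theorem stmt4 {X Y : Type*} (f : X → X) (g : Y → Y) (r : X → Y) (s : Y → X)
    (m : ℕ) (hm : 1 ≤ m)
    (hrf : r ∘ f = g ∘ r) (hfs : f ∘ s = s ∘ g)
    (hsr : s ∘ r = f^[m]) (hrs : r ∘ s = g^[m]) :
    ∃ (rbar : InvLim f → InvLim g) (sbar : InvLim g → InvLim f),
      (∀ (x : InvLim f) (n : ℕ), (rbar x).1 n = r (x.1 (m + n))) ∧
      (∀ (y : InvLim g) (n : ℕ), (sbar y).1 n = s (y.1 n)) ∧
      sbar ∘ rbar = id ∧ rbar ∘ sbar = id ∧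
      rbar ∘ shiftMap f = shiftMap g ∘ rbar :=
  stmt4_general f g r s m hrf hfs hsr hrs
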